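/- Under the orthogonality setting, the column space (range) of the projector P := I_n − J_x^{#A} J_x, viewed as a linear map ℝⁿ → ℝⁿ, equals the column space of A⁻¹ J_ξᵀ. -/

import Mathlib

open Matrix

/-!
Orthogonality makes `(Jx, Jξ)` and `(Jx^{#A}, Jξ^{#A})` a biorthogonal pair:
`Jx Jx^{#A} = 1`, `Jξ Jξ^{#A} = 1` and the cross products vanish. Since `m + r = n` the stacked
matrices are square, so this one-sided inverse is two-sided and
`Jx^{#A} Jx + Jξ^{#A} Jξ = 1`. Hence `P = Jξ^{#A} Jξ = (A⁻¹ Jξᵀ) ((Jξ A⁻¹ Jξᵀ)⁻¹ Jξ)`, and the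
second factor is a left inverse of the first, so `P` and `A⁻¹ Jξᵀ` have the same range.
-/

/-- The `A`-weighted generalized pseudo-inverse `J^{#A} = A⁻¹ Jᵀ (J A⁻¹ Jᵀ)⁻¹`. -/
noncomputable def weightedPseudoInv {n m : ℕ} (A : Matrix (Fin n) (Fin n) ℝ)
    (J : Matrix (Fin m) (Fin n) ℝ) : Matrix (Fin n) (Fin m) ℝ :=
  A⁻¹ * Jᵀ * (J * A⁻¹ * Jᵀ)⁻¹

theorem Matrix.mul_add_mul_eq_one_of_biorthogonal {R n ι κ : Type*} [CommRing R]
    [Fintype n] [Fintype ι] [Fintype κ] [DecidableEq n] [DecidableEq ι] [DecidableEq κ]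
    (e : n ≃ ι ⊕ κ) {J₁ : Matrix ι n R} {J₂ : Matrix κ n R} {C₁ : Matrix n ι R}
    {C₂ : Matrix n κ R} (h₁₁ : J₁ * C₁ = 1) (h₁₂ : J₁ * C₂ = 0) (h₂₁ : J₂ * C₁ = 0)
    (h₂₂ : J₂ * C₂ = 1) : C₁ * J₁ + C₂ * J₂ = 1 := by
  have hJC : fromRows J₁ J₂ * fromCols C₁ C₂ = 1 := by
    rw [fromRows_mul_fromCols, h₁₁, h₁₂, h₂₁, h₂₂, fromBlocks_one]
  rw [← fromCols_mul_fromRows]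
  exact (fromCols_mul_fromRows_eq_one_comm e C₁ C₂ J₁ J₂).mpr hJC

theorem Matrix.range_mulVecLin_mul_of_mul_eq_one {R m n : Type*} [CommRing R]
    [Fintype m] [Fintype n] [DecidableEq n] {M : Matrix m n R} {N : Matrix n m R}
    (h : N * M = 1) :
    LinearMap.range (M * N).mulVecLin = LinearMap.range M.mulVecLin := by
  refine le_antisymm ?_ ?_
  · rw [mulVecLin_mul]
    exact LinearMap.range_comp_le_range _ _
  · calc LinearMap.range M.mulVecLin
        = LinearMap.range (M * N * M).mulVecLin := by rw [Matrix.mul_assoc, h, Matrix.mul_one]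
      _ ≤ LinearMap.range (M * N).mulVecLin := by
        rw [mulVecLin_mul]
        exact LinearMap.range_comp_le_range _ _

theorem Matrix.mul_inv_mul_transpose_eq_zero_comm {R n ι κ : Type*} [CommRing R]
    [Fintype n] [DecidableEq n] {A : Matrix n n R} (hA : Aᵀ = A) {J : Matrix ι n R}
    {K : Matrix κ n R} (h : J * A⁻¹ * Kᵀ = 0) : K * A⁻¹ * Jᵀ = 0 := by
  simpa [transpose_mul, transpose_nonsing_inv, hA, Matrix.mul_assoc] using
    congrArg transpose h

section weightedPseudoInv

variable {n m k : ℕ} {A : Matrix (Fin n) (Fin n) ℝ}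

theorem mul_weightedPseudoInv {J : Matrix (Fin m) (Fin n) ℝ} (hJ : IsUnit (J * A⁻¹ * Jᵀ)) :
    J * weightedPseudoInv A J = 1 := by
  rw [weightedPseudoInv, ← Matrix.mul_assoc, ← Matrix.mul_assoc]
  exact mul_nonsing_inv _ ((isUnit_iff_isUnit_det _).mp hJ)

theorem mul_weightedPseudoInv_eq_zero {J : Matrix (Fin m) (Fin n) ℝ}
    {K : Matrix (Fin k) (Fin n) ℝ} (h : K * A⁻¹ * Jᵀ = 0) :
    K * weightedPseudoInv A J = 0 := by
  rw [weightedPseudoInv, ← Matrix.mul_assoc, ← Matrix.mul_assoc, h, Matrix.zero_mul]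

end weightedPseudoInv

theorem one_sub_weightedPseudoInv_mul {m r : ℕ} {A : Matrix (Fin (m + r)) (Fin (m + r)) ℝ}
    (hA : Aᵀ = A) {Jx : Matrix (Fin m) (Fin (m + r)) ℝ} {Jξ : Matrix (Fin r) (Fin (m + r)) ℝ}
    (hx : IsUnit (Jx * A⁻¹ * Jxᵀ)) (hξ : IsUnit (Jξ * A⁻¹ * Jξᵀ))
    (horth : Jx * A⁻¹ * Jξᵀ = 0) :
    1 - weightedPseudoInv A Jx * Jx = weightedPseudoInv A Jξ * Jξ := by
  have hsum := mul_add_mul_eq_one_of_biorthogonal finSumFinEquiv.symm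
    (mul_weightedPseudoInv hx) (mul_weightedPseudoInv_eq_zero horth)
    (mul_weightedPseudoInv_eq_zero (mul_inv_mul_transpose_eq_zero_comm hA horth))
    (mul_weightedPseudoInv hξ)
  rw [← hsum, add_sub_cancel_left]

/-- In the orthogonality setting, the range of the null-space projector
`P = I − Jx^{#A} Jx` (as a linear map `ℝⁿ → ℝⁿ`) equals the column space of `A⁻¹ Jξᵀ`. -/
theorem projector_range_eq {m r : ℕ}
    (A : Matrix (Fin (m + r)) (Fin (m + r)) ℝ) (hA : A.PosDef)
    (Jx : Matrix (Fin m) (Fin (m + r)) ℝ) (Jξ : Matrix (Fin r) (Fin (m + r)) ℝ)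
    (hx : IsUnit (Jx * A⁻¹ * Jxᵀ)) (hξ : IsUnit (Jξ * A⁻¹ * Jξᵀ))
    (horth : Jx * A⁻¹ * Jξᵀ = 0) :
    LinearMap.range (Matrix.mulVecLin
        ((1 : Matrix (Fin (m + r)) (Fin (m + r)) ℝ) - weightedPseudoInv A Jx * Jx)) =
      LinearMap.range (Matrix.mulVecLin (A⁻¹ * Jξᵀ)) := by
  have hAt : Aᵀ = A := by simpa using hA.isHermitian.eq
  have hleft : ((Jξ * A⁻¹ * Jξᵀ)⁻¹ * Jξ) * (A⁻¹ * Jξᵀ) = 1 := by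
    rw [Matrix.mul_assoc, ← Matrix.mul_assoc Jξ]
    exact nonsing_inv_mul _ ((isUnit_iff_isUnit_det _).mp hξ)
  rw [one_sub_weightedPseudoInv_mul hAt hx hξ horth, weightedPseudoInv, Matrix.mul_assoc]
  exact range_mulVecLin_mul_of_mul_eq_one hleft
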